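/- The composition s₀ ∘ s₂ has order three: (s₀ s₂)³ = id, i.e., at every point where all denominators occurring in the sixfold composition are nonzero, applying s₀, s₂ alternately three times each returns the original point. -/

import Mathlib

open Finset

noncomputable section

/-- A point `(ε, q, p, x) ∈ ℂ^{n+3} × ℂⁿ × ℂⁿ × ℂⁿ`, where `n = m + 2` (so `n ≥ 2`).
Indices are 0-based: `e ⟨j-1,_⟩` is the paper's `ε_j`, etc. -/
structure GPt (m : ℕ) where
  e : Fin (m + 5) → ℂ
  q : Fin (m + 2) → ℂ
  p : Fin (m + 2) → ℂ
  x : Fin (m + 2) → ℂ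

namespace GPt

variable {m : ℕ}

/-- `Q₁ = Σ_{l=1}^n q_l p_l + (1 − Σ_{l=1}^{n+3} ε_l)/2`. -/
def Q1 (P : GPt m) : ℂ := (∑ l, P.q l * P.p l) + (1 - ∑ j, P.e j) / 2

/-- `Q₂ = Σ_{j=1}^n q_j − 1`. -/
def Q2 (P : GPt m) : ℂ := (∑ j, P.q j) - 1

/-- The index of `ε_{j+3}` (paper numbering) for `j` indexing `q, p, x`. -/
def eIdx (j : Fin (m + 2)) : Fin (m + 5) := ⟨j.val + 3, by omega⟩

/-- The transformation `s₀`. -/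
def s0 (P : GPt m) : GPt m where
  e := fun j => if j = 0 then 1 - P.e 1 else if j = 1 then 1 - P.e 0 else P.e j
  q := fun j => P.p j * (P.q j * P.p j - P.e (eIdx j)) / (P.Q1 * (P.Q1 + P.e 2))
  p := fun j => -(P.Q1 * (P.Q1 + P.e 2)) / P.p j
  x := fun i => 1 / P.x i

/-- The transformation `s₁`. -/
def s1 (P : GPt m) : GPt m where
  e := fun j => P.e (Equiv.swap 0 1 j)
  q := fun j => P.q j / P.x j
  p := fun j => P.x j * P.p j
  x := fun i => 1 / P.x i

/-- The transformation `s₂`. -/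
def s2 (P : GPt m) : GPt m where
  e := fun j => P.e (Equiv.swap 1 2 j)
  q := fun j => P.q j / P.Q2
  p := fun j => (P.p j - P.Q1) * P.Q2
  x := fun i => P.x i / (P.x i - 1)

/-- The transformation `s₃`. -/
def s3 (P : GPt m) : GPt m where
  e := fun j => P.e (Equiv.swap 2 3 j)
  q := fun j => if j = 0 then 1 / P.q 0 else -P.q j / P.q 0
  p := fun j => if j = 0 then -(P.q 0 * P.Q1) else -(P.q 0 * P.p j)
  x := fun i => if i = 0 then 1 / P.x 0 else P.x i / P.x 0

/-- The transformation `s_k` for `4 ≤ k ≤ n+2`: `ε_k ↔ ε_{k+1}` together with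
`(q_{k-3}, p_{k-3}, x_{k-3}) ↔ (q_{k-2}, p_{k-2}, x_{k-2})` (paper numbering). -/
def sMid (k : ℕ) (h : 4 ≤ k ∧ k ≤ m + 4) (P : GPt m) : GPt m where
  e := fun j => P.e (Equiv.swap ⟨k - 1, by omega⟩ ⟨k, by omega⟩ j)
  q := fun j => P.q (Equiv.swap ⟨k - 4, by omega⟩ ⟨k - 3, by omega⟩ j)
  p := fun j => P.p (Equiv.swap ⟨k - 4, by omega⟩ ⟨k - 3, by omega⟩ j)
  x := fun j => P.x (Equiv.swap ⟨k - 4, by omega⟩ ⟨k - 3, by omega⟩ j)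

/-- The transformation `s_{n+3}`: `ε_{n+3} ↦ −ε_{n+3}`, `p_n ↦ p_n − ε_{n+3}/q_n`. -/
def sLast (P : GPt m) : GPt m where
  e := Function.update P.e ⟨m + 4, by omega⟩ (-(P.e ⟨m + 4, by omega⟩))
  q := P.q
  p := Function.update P.p (Fin.last (m + 1))
    (P.p (Fin.last (m + 1)) - P.e ⟨m + 4, by omega⟩ / P.q (Fin.last (m + 1)))
  x := P.x

/-- The family `s_k`, `k = 0, 1, …, n+3` (junk value `id` for `k > n+3`). -/
def s (k : ℕ) (P : GPt m) : GPt m :=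
  if k = 0 then P.s0
  else if k = 1 then P.s1
  else if k = 2 then P.s2
  else if k = 3 then P.s3
  else if h : 4 ≤ k ∧ k ≤ m + 4 then sMid k h P
  else if k = m + 5 then P.sLast
  else P

/-- The nonvanishing, at a given point, of all denominators occurring in `s_k`. -/
def Dfd (k : ℕ) (P : GPt m) : Prop :=
  if k = 0 then
    (∀ j, P.p j ≠ 0) ∧ P.Q1 ≠ 0 ∧ P.Q1 + P.e 2 ≠ 0 ∧ (∀ i, P.x i ≠ 0)
  else if k = 1 then ∀ i, P.x i ≠ 0
  else if k = 2 then P.Q2 ≠ 0 ∧ ∀ i, P.x i ≠ 1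
  else if k = 3 then P.q 0 ≠ 0 ∧ P.x 0 ≠ 0
  else if k = m + 5 then P.q (Fin.last (m + 1)) ≠ 0
  else True

/-- Apply `s_{k₁}, s_{k₂}, …` in succession. -/
def chain : List ℕ → GPt m → GPt m
  | [], P => P
  | k :: ks, P => chain ks (s k P)

/-- All denominators occurring in the successive application of
`s_{k₁}, s_{k₂}, …` are nonzero. -/
def chainDfd : List ℕ → GPt m → Prop
  | [], _ => True
  | k :: ks, P => Dfd k P ∧ chainDfd ks (s k P)

end GPt

open GPt

namespace GPt

variable {m : ℕ}

/-- Nonvanishing of all denominators occurring in `s₀`. -/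
def Dfd0 (P : GPt m) : Prop :=
  (∀ j, P.p j ≠ 0) ∧ P.Q1 ≠ 0 ∧ P.Q1 + P.e 2 ≠ 0 ∧ (∀ i, P.x i ≠ 0)

/-- Nonvanishing of all denominators occurring in `s₁`. -/
def Dfd1 (P : GPt m) : Prop := ∀ i, P.x i ≠ 0

/-- Nonvanishing of all denominators occurring in `s₂`. -/
def Dfd2 (P : GPt m) : Prop := P.Q2 ≠ 0 ∧ ∀ i, P.x i ≠ 1

/-- Nonvanishing of all denominators occurring in `s₃`. -/
def Dfd3 (P : GPt m) : Prop := P.q 0 ≠ 0 ∧ P.x 0 ≠ 0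

/-- Nonvanishing of all denominators occurring in `s_{n+3}`. -/
def DfdLast (P : GPt m) : Prop := P.q (Fin.last (m + 1)) ≠ 0

end GPt

/-!
On the `x`-coordinates `s₂ ∘ s₀` is the Möbius map `x ↦ 1/(1 - x)` of order three, and on the
`ε`'s an affine map of order three, so the content lies in `(q, p)`. Tracking the products
`q_j p_j` instead of `q_j`, each application of `s₀` or `s₂` is explicit, with
`Q₁ ↦ -(Q₁ + ε₃)` under `s₀` and `Q₁ ↦ -Q₁ Q₂`, `Q₂ ↦ 1/Q₂` under `s₂`. The one quantity that does
not follow step by step is `Q₂` after `s₀ s₂ s₀`: there the new `q_j` is a linear combination of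
`q_j`, `(s₀ q)_j`, `q_j p_j` and `ε_{j+3}`, whose sums over `j` are known, giving
`Q₂ (s₀ s₂ s₀ P) = (Q₁ Q₂ - ε₂) / (Q₁ (s₀ s₂ P) + ε₃ (s₀ s₂ P))`. With it one finds
`s₀ s₂ s₀ s₂ s₀ = s₂`, and `s₂` is an involution.
-/

namespace GPt

variable {m : ℕ}

@[ext]
lemma ext {X Y : GPt m} (he : X.e = Y.e) (hq : X.q = Y.q) (hp : X.p = Y.p) (hx : X.x = Y.x) :
    X = Y := by
  cases X; cases Y; congr

section Epsilon

variable (P : GPt m)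

lemma fin_two_ne_zero : (2 : Fin (m + 5)) ≠ 0 := by
  simp [Fin.ext_iff, Nat.mod_eq_of_lt (show 2 < m + 5 by omega)]

lemma fin_two_ne_one : (2 : Fin (m + 5)) ≠ 1 := by
  simp [Fin.ext_iff, Nat.mod_eq_of_lt (show 2 < m + 5 by omega)]

lemma eIdx_ne_zero (j : Fin (m + 2)) : eIdx j ≠ 0 :=
  fun h => by simp [eIdx] at h

lemma eIdx_ne_one (j : Fin (m + 2)) : eIdx j ≠ 1 :=
  fun h => by simp [eIdx] at h

lemma eIdx_ne_two (j : Fin (m + 2)) : eIdx j ≠ 2 := fun h => by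
  simp [eIdx, Fin.ext_iff, Nat.mod_eq_of_lt (show 2 < m + 5 by omega)] at h

@[simp] lemma s0_e_zero : P.s0.e 0 = 1 - P.e 1 := by simp [s0]

@[simp] lemma s0_e_one : P.s0.e 1 = 1 - P.e 0 := by simp [s0]

lemma s0_e_of_ne {j : Fin (m + 5)} (h0 : j ≠ 0) (h1 : j ≠ 1) : P.s0.e j = P.e j := by
  simp [s0, h0, h1]

@[simp] lemma s0_e_two : P.s0.e 2 = P.e 2 := P.s0_e_of_ne fin_two_ne_zero fin_two_ne_one

@[simp] lemma s0_e_eIdx (j : Fin (m + 2)) : P.s0.e (eIdx j) = P.e (eIdx j) :=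
  P.s0_e_of_ne (eIdx_ne_zero j) (eIdx_ne_one j)

@[simp] lemma s2_e_one : P.s2.e 1 = P.e 2 := by simp [s2]

@[simp] lemma s2_e_two : P.s2.e 2 = P.e 1 := by simp [s2]

lemma s2_e_of_ne {j : Fin (m + 5)} (h1 : j ≠ 1) (h2 : j ≠ 2) : P.s2.e j = P.e j := by
  simp [s2, Equiv.swap_apply_of_ne_of_ne h1 h2]

@[simp] lemma s2_e_zero : P.s2.e 0 = P.e 0 :=
  P.s2_e_of_ne zero_ne_one fin_two_ne_zero.symm

@[simp] lemma s2_e_eIdx (j : Fin (m + 2)) : P.s2.e (eIdx j) = P.e (eIdx j) :=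
  P.s2_e_of_ne (eIdx_ne_one j) (eIdx_ne_two j)

lemma sum_e_eq_add_sum_eIdx : ∑ j, P.e j = P.e 0 + P.e 1 + P.e 2 + ∑ j, P.e (eIdx j) := by
  rw [Fin.sum_univ_succ, Fin.sum_univ_succ, Fin.sum_univ_succ, ← add_assoc, ← add_assoc]
  rfl

end Epsilon

section OneStep

variable (P : GPt m)

lemma sum_q_mul_p : ∑ j, P.q j * P.p j = P.Q1 - (1 - ∑ j, P.e j) / 2 := by
  rw [Q1]; ring

lemma sum_q : ∑ j, P.q j = P.Q2 + 1 := by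
  rw [Q2]; ring

lemma s0_q (j : Fin (m + 2)) :
    P.s0.q j = P.p j * (P.q j * P.p j - P.e (eIdx j)) / (P.Q1 * (P.Q1 + P.e 2)) := rfl

lemma s0_p (j : Fin (m + 2)) : P.s0.p j = -(P.Q1 * (P.Q1 + P.e 2)) / P.p j := rfl

lemma s0_x (i : Fin (m + 2)) : P.s0.x i = 1 / P.x i := rfl

lemma s0_q_mul_p {j : Fin (m + 2)} (hp : P.p j ≠ 0) (ha : P.Q1 ≠ 0) (hb : P.Q1 + P.e 2 ≠ 0) :
    P.s0.q j * P.s0.p j = P.e (eIdx j) - P.q j * P.p j := by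
  simp only [s0]
  field_simp
  ring

lemma Q1_s0 (hp : ∀ j, P.p j ≠ 0) (ha : P.Q1 ≠ 0) (hb : P.Q1 + P.e 2 ≠ 0) :
    P.s0.Q1 = -(P.Q1 + P.e 2) := by
  have hsum : ∑ j, P.s0.e j = ∑ j, P.e j + 2 - 2 * P.e 0 - 2 * P.e 1 := by
    rw [sum_e_eq_add_sum_eIdx, P.sum_e_eq_add_sum_eIdx]
    simp only [s0_e_zero, s0_e_one, s0_e_two, s0_e_eIdx]
    ring
  rw [Q1, Finset.sum_congr rfl fun j _ => P.s0_q_mul_p (hp j) ha hb, Finset.sum_sub_distrib,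
    sum_q_mul_p, hsum, P.sum_e_eq_add_sum_eIdx]
  ring

lemma s2_q (j : Fin (m + 2)) : P.s2.q j = P.q j / P.Q2 := rfl

lemma s2_p (j : Fin (m + 2)) : P.s2.p j = (P.p j - P.Q1) * P.Q2 := rfl

lemma s2_x (i : Fin (m + 2)) : P.s2.x i = P.x i / (P.x i - 1) := rfl

lemma s2_q_mul_p (j : Fin (m + 2)) (hc : P.Q2 ≠ 0) :
    P.s2.q j * P.s2.p j = P.q j * (P.p j - P.Q1) := by
  simp only [s2]
  field_simp

lemma Q1_s2 (hc : P.Q2 ≠ 0) : P.s2.Q1 = -(P.Q1 * P.Q2) := by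
  have hsum : ∑ j, P.s2.e j = ∑ j, P.e j := Equiv.sum_comp _ P.e
  rw [Q1, Finset.sum_congr rfl fun j _ => P.s2_q_mul_p j hc, hsum]
  simp only [mul_sub, Finset.sum_sub_distrib, ← Finset.sum_mul, sum_q_mul_p, sum_q]
  ring

lemma Q2_s2 (hc : P.Q2 ≠ 0) : P.s2.Q2 = P.Q2⁻¹ := by
  rw [Q2]
  simp only [s2]
  rw [← Finset.sum_div, sum_q]
  field_simp
  ring

lemma s2_s2 (hc : P.Q2 ≠ 0) (hx : ∀ i, P.x i ≠ 1) : P.s2.s2 = P := by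
  ext j
  · simp [s2]
  · rw [s2_q, s2_q, Q2_s2 P hc]
    field_simp
  · rw [s2_p, s2_p, Q1_s2 P hc, Q2_s2 P hc]
    field_simp
    ring
  · have : P.x j - 1 ≠ 0 := sub_ne_zero.mpr (hx j)
    rw [s2_x, s2_x]
    field_simp
    ring

end OneStep

section Composite

variable (P : GPt m)

lemma s0_s2_s0_s2_s0_e : P.s0.s2.s0.s2.s0.e = P.s2.e := by
  ext j
  obtain rfl | rfl | rfl | ⟨h0, h1, h2⟩ : j = 0 ∨ j = 1 ∨ j = 2 ∨ (j ≠ 0 ∧ j ≠ 1 ∧ j ≠ 2) := by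
    tauto
  · simp
  · simp
  · simp
  · simp [s0_e_of_ne _ h0 h1, s2_e_of_ne _ h1 h2]

lemma s0_s2_s0_s2_s0_x {i : Fin (m + 2)} (hx₀ : P.x i ≠ 0) (hx₁ : P.x i ≠ 1) :
    P.s0.s2.s0.s2.s0.x i = P.s2.x i := by
  have := sub_ne_zero.mpr hx₁
  have := sub_ne_zero.mpr hx₁.symm
  simp only [s0_x, s2_x]
  field_simp
  ring

lemma Q1_s0_s2 (hp : ∀ j, P.p j ≠ 0) (ha : P.Q1 ≠ 0) (hb : P.Q1 + P.e 2 ≠ 0)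
    (hc₁ : P.s0.Q2 ≠ 0) : P.s0.s2.Q1 = (P.Q1 + P.e 2) * P.s0.Q2 := by
  rw [Q1_s2 _ hc₁, Q1_s0 P hp ha hb]
  ring

lemma Q1_add_e_two_s0_s2 (hp : ∀ j, P.p j ≠ 0) (ha : P.Q1 ≠ 0) (hb : P.Q1 + P.e 2 ≠ 0)
    (hc₁ : P.s0.Q2 ≠ 0) :
    P.s0.s2.Q1 + P.s0.s2.e 2 = (P.Q1 + P.e 2) * P.s0.Q2 + (1 - P.e 0) := by
  rw [Q1_s0_s2 P hp ha hb hc₁, s2_e_two, s0_e_one]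

lemma s0_s2_p (hp : ∀ j, P.p j ≠ 0) (ha : P.Q1 ≠ 0) (hb : P.Q1 + P.e 2 ≠ 0) (j : Fin (m + 2)) :
    P.s0.s2.p j = (P.Q1 + P.e 2) * P.s0.Q2 * (P.p j - P.Q1) / P.p j := by
  have := hp j
  rw [s2_p, s0_p, Q1_s0 P hp ha hb]
  field_simp
  ring

lemma s0_s2_q_mul_p (hp : ∀ j, P.p j ≠ 0) (ha : P.Q1 ≠ 0) (hb : P.Q1 + P.e 2 ≠ 0)
    (hc₁ : P.s0.Q2 ≠ 0) (j : Fin (m + 2)) :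
    P.s0.s2.q j * P.s0.s2.p j = (P.q j * P.p j - P.e (eIdx j)) * (P.p j - P.Q1) / P.Q1 := by
  have := hp j
  rw [s2_q_mul_p _ j hc₁, s0_q, s0_p, Q1_s0 P hp ha hb]
  field_simp
  ring

/-- The right-hand side is linear in `q`, `s₀ q`, `q p` and `ε`, so it can be summed over `j`
in terms of `Q₁`, `Q₂` and `Q₂ ∘ s₀`. -/
lemma s0_s2_s0_q_mul (hp : ∀ j, P.p j ≠ 0) (ha : P.Q1 ≠ 0) (hb : P.Q1 + P.e 2 ≠ 0)
    (hc₁ : P.s0.Q2 ≠ 0) (hb₂ : P.s0.s2.Q1 + P.s0.s2.e 2 ≠ 0) (j : Fin (m + 2)) :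
    P.s0.s2.s0.q j * (P.s0.s2.Q1 + P.s0.s2.e 2) =
      (P.Q1 + P.e 2) * P.s0.q j - 2 * (P.q j * P.p j) + P.e (eIdx j) + P.Q1 * P.q j := by
  have := hp j
  rw [Q1_add_e_two_s0_s2 P hp ha hb hc₁] at hb₂ ⊢
  rw [s0_q P.s0.s2, Q1_add_e_two_s0_s2 P hp ha hb hc₁, s0_s2_q_mul_p P hp ha hb hc₁,
    s0_s2_p P hp ha hb, Q1_s0_s2 P hp ha hb hc₁, s0_q, s2_e_eIdx, s0_e_eIdx]
  field_simp
  ring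

lemma Q2_s0_s2_s0_mul (hp : ∀ j, P.p j ≠ 0) (ha : P.Q1 ≠ 0) (hb : P.Q1 + P.e 2 ≠ 0)
    (hc₁ : P.s0.Q2 ≠ 0) (hb₂ : P.s0.s2.Q1 + P.s0.s2.e 2 ≠ 0) :
    P.s0.s2.s0.Q2 * (P.s0.s2.Q1 + P.s0.s2.e 2) = P.Q1 * P.Q2 - P.e 1 := by
  rw [Q2, sub_mul, Finset.sum_mul,
    Finset.sum_congr rfl fun j _ => P.s0_s2_s0_q_mul hp ha hb hc₁ hb₂ j,
    Q1_add_e_two_s0_s2 P hp ha hb hc₁]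
  simp only [Finset.sum_add_distrib, Finset.sum_sub_distrib, ← Finset.mul_sum, sum_q, sum_q_mul_p]
  rw [P.sum_e_eq_add_sum_eIdx]
  ring

lemma Q1_s0_s2_s0_s2 (hp : ∀ j, P.p j ≠ 0) (ha : P.Q1 ≠ 0) (hb : P.Q1 + P.e 2 ≠ 0)
    (hc₁ : P.s0.Q2 ≠ 0) (hp₂ : ∀ j, P.s0.s2.p j ≠ 0) (ha₂ : P.s0.s2.Q1 ≠ 0)
    (hb₂ : P.s0.s2.Q1 + P.s0.s2.e 2 ≠ 0) (hc₃ : P.s0.s2.s0.Q2 ≠ 0) :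
    P.s0.s2.s0.s2.Q1 = P.Q1 * P.Q2 - P.e 1 := by
  rw [Q1_s0_s2 _ hp₂ ha₂ hb₂ hc₃, mul_comm, P.Q2_s0_s2_s0_mul hp ha hb hc₁ hb₂]

lemma Q1_add_e_two_s0_s2_s0_s2 (hp : ∀ j, P.p j ≠ 0) (ha : P.Q1 ≠ 0) (hb : P.Q1 + P.e 2 ≠ 0)
    (hc₁ : P.s0.Q2 ≠ 0) (hp₂ : ∀ j, P.s0.s2.p j ≠ 0) (ha₂ : P.s0.s2.Q1 ≠ 0)
    (hb₂ : P.s0.s2.Q1 + P.s0.s2.e 2 ≠ 0) (hc₃ : P.s0.s2.s0.Q2 ≠ 0) :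
    P.s0.s2.s0.s2.Q1 + P.s0.s2.s0.s2.e 2 = P.Q1 * P.Q2 := by
  rw [P.Q1_s0_s2_s0_s2 hp ha hb hc₁ hp₂ ha₂ hb₂ hc₃]
  simp

lemma sub_Q1_ne_zero (hp : ∀ j, P.p j ≠ 0) (ha : P.Q1 ≠ 0) (hb : P.Q1 + P.e 2 ≠ 0)
    (hp₂ : ∀ j, P.s0.s2.p j ≠ 0) (j : Fin (m + 2)) : P.p j - P.Q1 ≠ 0 := fun h =>
  hp₂ j (by rw [s0_s2_p P hp ha hb, h, mul_zero, zero_div])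

lemma s0_s2_s0_s2_p (hp : ∀ j, P.p j ≠ 0) (ha : P.Q1 ≠ 0) (hb : P.Q1 + P.e 2 ≠ 0)
    (hc₁ : P.s0.Q2 ≠ 0) (hp₂ : ∀ j, P.s0.s2.p j ≠ 0) (ha₂ : P.s0.s2.Q1 ≠ 0)
    (hb₂ : P.s0.s2.Q1 + P.s0.s2.e 2 ≠ 0) (j : Fin (m + 2)) :
    P.s0.s2.s0.s2.p j = -(P.Q1 * (P.Q1 * P.Q2 - P.e 1)) / (P.p j - P.Q1) := by
  have := hp j
  have := P.sub_Q1_ne_zero hp ha hb hp₂ j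
  rw [s0_s2_p _ hp₂ ha₂ hb₂, mul_comm (_ + _), P.Q2_s0_s2_s0_mul hp ha hb hc₁ hb₂,
    s0_s2_p P hp ha hb, Q1_s0_s2 P hp ha hb hc₁]
  field_simp
  ring

lemma s0_s2_s0_s2_q_mul_p_sub (hp : ∀ j, P.p j ≠ 0) (ha : P.Q1 ≠ 0) (hb : P.Q1 + P.e 2 ≠ 0)
    (hc₁ : P.s0.Q2 ≠ 0) (hp₂ : ∀ j, P.s0.s2.p j ≠ 0) (ha₂ : P.s0.s2.Q1 ≠ 0)
    (hb₂ : P.s0.s2.Q1 + P.s0.s2.e 2 ≠ 0) (hc₃ : P.s0.s2.s0.Q2 ≠ 0) (j : Fin (m + 2)) :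
    P.s0.s2.s0.s2.q j * P.s0.s2.s0.s2.p j - P.e (eIdx j) = P.q j * (P.Q1 - P.p j) := by
  have := hp j
  have := P.sub_Q1_ne_zero hp ha hb hp₂ j
  rw [s0_s2_q_mul_p _ hp₂ ha₂ hb₂ hc₃, s0_s2_q_mul_p P hp ha hb hc₁, s0_s2_p P hp ha hb,
    Q1_s0_s2 P hp ha hb hc₁, s2_e_eIdx, s0_e_eIdx]
  field_simp
  ring

lemma s0_s2_s0_s2_s0_eq_s2 (hp : ∀ j, P.p j ≠ 0) (ha : P.Q1 ≠ 0) (hb : P.Q1 + P.e 2 ≠ 0)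
    (hc₁ : P.s0.Q2 ≠ 0) (hp₂ : ∀ j, P.s0.s2.p j ≠ 0) (ha₂ : P.s0.s2.Q1 ≠ 0)
    (hb₂ : P.s0.s2.Q1 + P.s0.s2.e 2 ≠ 0) (hc₃ : P.s0.s2.s0.Q2 ≠ 0) (hc : P.Q2 ≠ 0)
    (hx₀ : ∀ i, P.x i ≠ 0) (hx₁ : ∀ i, P.x i ≠ 1) :
    P.s0.s2.s0.s2.s0 = P.s2 := by
  have hd : P.Q1 * P.Q2 - P.e 1 ≠ 0 := by
    rw [← P.Q2_s0_s2_s0_mul hp ha hb hc₁ hb₂]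
    exact mul_ne_zero hc₃ hb₂
  ext j
  · exact congrFun P.s0_s2_s0_s2_s0_e j
  · have := P.sub_Q1_ne_zero hp ha hb hp₂ j
    rw [s0_q, P.Q1_add_e_two_s0_s2_s0_s2 hp ha hb hc₁ hp₂ ha₂ hb₂ hc₃]
    simp only [s2_e_eIdx, s0_e_eIdx]
    rw [P.s0_s2_s0_s2_q_mul_p_sub hp ha hb hc₁ hp₂ ha₂ hb₂ hc₃,
      P.s0_s2_s0_s2_p hp ha hb hc₁ hp₂ ha₂ hb₂, P.Q1_s0_s2_s0_s2 hp ha hb hc₁ hp₂ ha₂ hb₂ hc₃, s2_q]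
    field_simp
    ring
  · have := P.sub_Q1_ne_zero hp ha hb hp₂ j
    rw [s0_p, P.Q1_add_e_two_s0_s2_s0_s2 hp ha hb hc₁ hp₂ ha₂ hb₂ hc₃,
      P.s0_s2_s0_s2_p hp ha hb hc₁ hp₂ ha₂ hb₂, P.Q1_s0_s2_s0_s2 hp ha hb hc₁ hp₂ ha₂ hb₂ hc₃, s2_p]
    field_simp
  · exact P.s0_s2_s0_s2_s0_x (hx₀ j) (hx₁ j)

end Composite

end GPt

theorem s0_s2_order_three (m : ℕ) (P : GPt m)
    (h0 : Dfd0 P) (h1 : Dfd2 P.s0) (h2 : Dfd0 P.s0.s2)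
    (h3 : Dfd2 P.s0.s2.s0) (h4 : Dfd0 P.s0.s2.s0.s2) :
    P.s0.s2.s0.s2.s0.s2 = P := by
  obtain ⟨hp, ha, hb, hx₀⟩ := h0
  obtain ⟨hc₁, hx₁⟩ := h1
  obtain ⟨hp₂, ha₂, hb₂, -⟩ := h2
  obtain ⟨hc₃, -⟩ := h3
  have hc : P.Q2 ≠ 0 := by
    have hb₄ := h4.2.2.1
    rw [P.Q1_add_e_two_s0_s2_s0_s2 hp ha hb hc₁ hp₂ ha₂ hb₂ hc₃] at hb₄
    exact right_ne_zero_of_mul hb₄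
  have hx : ∀ i, P.x i ≠ 1 := fun i h => hx₁ i (by rw [s0_x, h, div_one])
  rw [P.s0_s2_s0_s2_s0_eq_s2 hp ha hb hc₁ hp₂ ha₂ hb₂ hc₃ hc hx₀ hx, P.s2_s2 hc hx]
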